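/- arXiv:1812.00196 — 8 statements merged into one kernel-verified Lean document; each statement's English description precedes it below -/
import Mathlib

section
/- Let h : ℝⁿ → ℝ be positively homogeneous and suppose h(g) = min_{C ∈ E*} max_{v ∈ C} ⟨v, g⟩ for all g, where E* is a nonempty family of nonempty convex compact sets. Then h(g) ≥ 0 for all g ∈ ℝⁿ if and only if 0 ∈ C for every C ∈ E*. -/
/-!
If `0 ∈ C` for every `C ∈ E*`, each support value `max_{v ∈ C} ⟪v, g⟫` is at least `⟪0, g⟫ = 0`,
so their minimum `h g` is nonnegative. Conversely, if some `C ∈ E*` misses the origin, a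
hyperplane strictly separates `0` from the closed convex set `C`: some `g` has `⟪v, g⟫ < u < 0`
on `C`, and then `h g ≤ max_{v ∈ C} ⟪v, g⟫ < 0`.
-/

section SupportValue

variable {E : Type*} [NormedAddCommGroup E] [InnerProductSpace ℝ E]

lemma zero_le_sSup_inner_image_of_zero_mem {C : Set E} (hC : IsCompact C) (h0 : (0 : E) ∈ C)
    (g : E) : 0 ≤ sSup ((fun v => (inner ℝ v g : ℝ)) '' C) :=
  le_csSup (hC.image (continuous_id.inner continuous_const)).bddAbove ⟨0, h0, inner_zero_left g⟩

lemma exists_sSup_inner_image_neg_of_zero_notMem [CompleteSpace E] {C : Set E}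
    (hne : C.Nonempty) (hconv : Convex ℝ C) (hclosed : IsClosed C) (h0 : (0 : E) ∉ C) :
    ∃ g : E, sSup ((fun v => (inner ℝ v g : ℝ)) '' C) < 0 := by
  obtain ⟨f, u, hfC, hu⟩ := geometric_hahn_banach_closed_point hconv hclosed h0
  rw [map_zero] at hu
  refine ⟨(InnerProductSpace.toDual ℝ E).symm f, (csSup_le (hne.image _) ?_).trans_lt hu⟩
  rintro _ ⟨v, hv, rfl⟩
  dsimp only
  rw [real_inner_comm, InnerProductSpace.toDual_symm_apply]
  exact (hfC v hv).le

end SupportValue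

theorem upper_exhauster_nonneg_iff_general {n : ℕ} (h : EuclideanSpace ℝ (Fin n) → ℝ)
    (Estar : Set (Set (EuclideanSpace ℝ (Fin n))))
    (hsets : ∀ C ∈ Estar, C.Nonempty ∧ Convex ℝ C ∧ IsCompact C)
    (hrep : ∀ g : EuclideanSpace ℝ (Fin n),
      IsLeast ((fun C => sSup ((fun v => (inner ℝ v g : ℝ)) '' C)) '' Estar) (h g)) :
    (∀ g, 0 ≤ h g) ↔ ∀ C ∈ Estar, (0 : EuclideanSpace ℝ (Fin n)) ∈ C := by
  constructor
  · intro hnonneg C hC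
    by_contra h0
    obtain ⟨hne, hconv, hcomp⟩ := hsets C hC
    obtain ⟨g, hg⟩ :=
      exists_sSup_inner_image_neg_of_zero_notMem hne hconv hcomp.isClosed h0
    exact (hnonneg g).not_gt (((hrep g).2 ⟨C, hC, rfl⟩).trans_lt hg)
  · intro h0 g
    obtain ⟨⟨C, hC, hCg⟩, -⟩ := hrep g
    rw [← hCg]
    exact zero_le_sSup_inner_image_of_zero_mem (hsets C hC).2.2 (h0 C hC) g

/-- for a positively homogeneous function represented by an upper exhauster
(min of max of linear functions), nonnegativity everywhere is equivalent to every set of the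
exhauster containing the origin. -/
theorem upper_exhauster_nonneg_iff {n : ℕ} (h : EuclideanSpace ℝ (Fin n) → ℝ)
    (Estar : Set (Set (EuclideanSpace ℝ (Fin n))))
    (hne : Estar.Nonempty)
    (hsets : ∀ C ∈ Estar, C.Nonempty ∧ Convex ℝ C ∧ IsCompact C)
    (hph : ∀ (l : ℝ), 0 < l → ∀ g, h (l • g) = l * h g)
    (hrep : ∀ g : EuclideanSpace ℝ (Fin n),
      IsLeast ((fun C => sSup ((fun v => (inner ℝ v g : ℝ)) '' C)) '' Estar) (h g)) :
    (∀ g, 0 ≤ h g) ↔ ∀ C ∈ Estar, (0 : EuclideanSpace ℝ (Fin n)) ∈ C :=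
  upper_exhauster_nonneg_iff_general h Estar hsets hrep
end

section
/- Let h : ℝⁿ → ℝ satisfy h(g) = max_{C ∈ E_*} min_{w ∈ C} ⟨w, g⟩ for all g, where E_* is a nonempty family of nonempty convex compact sets. Then h(g) ≤ 0 for all g ∈ ℝⁿ if and only if 0 ∈ C for every C ∈ E_*. -/
open Set

open scoped RealInnerProductSpace

section InnerInf

variable {E : Type*} [NormedAddCommGroup E] [InnerProductSpace ℝ E] {C : Set E}

theorem sInf_inner_image_le_zero_of_zero_mem (hC : IsCompact C) (h0 : (0 : E) ∈ C) (g : E) :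
    sInf ((fun w => ⟪w, g⟫) '' C) ≤ 0 := by
  have hbdd : BddBelow ((fun w => ⟪w, g⟫) '' C) :=
    (hC.image (continuous_id.inner continuous_const)).bddBelow
  simpa using csInf_le hbdd ⟨0, h0, rfl⟩

theorem exists_zero_lt_sInf_inner_image_of_zero_notMem [CompleteSpace E] (hne : C.Nonempty)
    (hconv : Convex ℝ C) (hclosed : IsClosed C) (h0 : (0 : E) ∉ C) :
    ∃ g : E, 0 < sInf ((fun w => ⟪w, g⟫) '' C) := by
  obtain ⟨f, u, hf0, hfC⟩ := geometric_hahn_banach_point_closed hconv hclosed h0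
  obtain ⟨g, rfl⟩ := (InnerProductSpace.toDual ℝ E).surjective f
  rw [map_zero] at hf0
  refine ⟨g, hf0.trans_le (le_csInf (hne.image _) ?_)⟩
  rintro _ ⟨w, hw, rfl⟩
  simpa [real_inner_comm] using (hfC w hw).le

end InnerInf

theorem lower_exhauster_nonpos_iff_general {n : ℕ} (h : EuclideanSpace ℝ (Fin n) → ℝ)
    (Elow : Set (Set (EuclideanSpace ℝ (Fin n))))
    (hsets : ∀ C ∈ Elow, C.Nonempty ∧ Convex ℝ C ∧ IsCompact C)
    (hrep : ∀ g : EuclideanSpace ℝ (Fin n),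
      IsGreatest ((fun C => sInf ((fun w => (inner ℝ w g : ℝ)) '' C)) '' Elow) (h g)) :
    (∀ g, h g ≤ 0) ↔ ∀ C ∈ Elow, (0 : EuclideanSpace ℝ (Fin n)) ∈ C := by
  constructor
  · intro hnonpos C hC
    by_contra h0
    obtain ⟨hne, hconv, hcomp⟩ := hsets C hC
    obtain ⟨g, hg⟩ :=
      exists_zero_lt_sInf_inner_image_of_zero_notMem hne hconv hcomp.isClosed h0
    exact (hg.trans_le ((hrep g).2 ⟨C, hC, rfl⟩)).not_ge (hnonpos g)
  · intro h0 g
    obtain ⟨C, hC, hCg⟩ := (hrep g).1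
    rw [← hCg]
    exact sInf_inner_image_le_zero_of_zero_mem (hsets C hC).2.2 (h0 C hC) g

/-- for a function represented by a lower exhauster (max of min of linear
functions), nonpositivity everywhere is equivalent to every set of the exhauster containing
the origin. -/
theorem lower_exhauster_nonpos_iff {n : ℕ} (h : EuclideanSpace ℝ (Fin n) → ℝ)
    (Elow : Set (Set (EuclideanSpace ℝ (Fin n))))
    (hne : Elow.Nonempty)
    (hsets : ∀ C ∈ Elow, C.Nonempty ∧ Convex ℝ C ∧ IsCompact C)
    (hrep : ∀ g : EuclideanSpace ℝ (Fin n),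
      IsGreatest ((fun C => sInf ((fun w => (inner ℝ w g : ℝ)) '' C)) '' Elow) (h g)) :
    (∀ g, h g ≤ 0) ↔ ∀ C ∈ Elow, (0 : EuclideanSpace ℝ (Fin n)) ∈ C :=
  lower_exhauster_nonpos_iff_general h Elow hsets hrep
end

section
/- If f : ℝⁿ → ℝ attains a local minimum at x* and f has an upper exhauster E* at x* in the sense of Dini (i.e., f'_D(x*,g) = min_{C ∈ E*} max_{v ∈ C} ⟨v,g⟩ for all g), then 0 ∈ C for every C ∈ E*. -/
open Filter Topology Set

/-! At a local minimum every one-sided difference quotient `(f (x + α • g) - f x) / α` is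
eventually nonnegative, so the Dini derivative `φ` is nonnegative in every direction. If some
set `C` of the exhauster missed the origin, a separating hyperplane would give a direction `g`
with `max_{v ∈ C} ⟪v, g⟫ < 0`, whereas the exhauster formula gives `φ g ≤ max_{v ∈ C} ⟪v, g⟫`. -/

theorem IsLocalMin.nonneg_of_tendsto_slope_nhdsGT {E : Type*} [TopologicalSpace E]
    [AddCommGroup E] [Module ℝ E] [ContinuousAdd E] [ContinuousSMul ℝ E]
    {f : E → ℝ} {x g : E} {d : ℝ} (hmin : IsLocalMin f x)
    (hd : Tendsto (fun α : ℝ => (f (x + α • g) - f x) / α) (𝓝[>] 0) (𝓝 d)) : 0 ≤ d := by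
  have hline : Tendsto (fun α : ℝ => x + α • g) (𝓝[>] 0) (𝓝 x) := by
    have : Continuous fun α : ℝ => x + α • g := by fun_prop
    simpa using (this.tendsto 0).mono_left nhdsWithin_le_nhds
  have hslope : ∀ᶠ α in 𝓝[>] (0 : ℝ), 0 ≤ (f (x + α • g) - f x) / α := by
    filter_upwards [hline.eventually hmin, self_mem_nhdsWithin] with α hle (hα : 0 < α)
    exact div_nonneg (sub_nonneg.mpr hle) hα.le
  exact ge_of_tendsto hd hslope

theorem exists_sSup_inner_lt_inner_of_notMem {E : Type*} [NormedAddCommGroup E]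
    [InnerProductSpace ℝ E] [CompleteSpace E] {C : Set E} {x : E} (hne : C.Nonempty)
    (hconv : Convex ℝ C) (hclosed : IsClosed C) (hx : x ∉ C) :
    ∃ g : E, sSup ((fun v => (inner ℝ v g : ℝ)) '' C) < inner ℝ x g := by
  obtain ⟨L, u, hLC, hLx⟩ := geometric_hahn_banach_closed_point hconv hclosed hx
  set g := (InnerProductSpace.toDual ℝ E).symm L
  have hLg : ∀ v, (inner ℝ v g : ℝ) = L v := fun v => by
    rw [real_inner_comm, InnerProductSpace.toDual_symm_apply]
  refine ⟨g, ?_⟩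
  calc sSup ((fun v => (inner ℝ v g : ℝ)) '' C) ≤ u :=
        csSup_le (hne.image _) (forall_mem_image.mpr fun v hv => (hLg v).symm ▸ (hLC v hv).le)
    _ < inner ℝ x g := hLg x ▸ hLx

theorem local_min_upper_exhauster_general {n : ℕ} (f : EuclideanSpace ℝ (Fin n) → ℝ)
    (xs : EuclideanSpace ℝ (Fin n)) (φ : EuclideanSpace ℝ (Fin n) → ℝ)
    (Estar : Set (Set (EuclideanSpace ℝ (Fin n))))
    (hmin : IsLocalMin f xs)
    (hD : ∀ g : EuclideanSpace ℝ (Fin n),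
      Tendsto (fun α : ℝ => (f (xs + α • g) - f xs) / α) (𝓝[>] (0:ℝ)) (𝓝 (φ g)))
    (hsets : ∀ C ∈ Estar, C.Nonempty ∧ Convex ℝ C ∧ IsCompact C)
    (hrep : ∀ g : EuclideanSpace ℝ (Fin n),
      IsLeast ((fun C => sSup ((fun v => (inner ℝ v g : ℝ)) '' C)) '' Estar) (φ g)) :
    ∀ C ∈ Estar, (0 : EuclideanSpace ℝ (Fin n)) ∈ C := by
  intro C hC
  by_contra h0
  obtain ⟨hCne, hconv, hcomp⟩ := hsets C hC
  obtain ⟨g, hsep⟩ := exists_sSup_inner_lt_inner_of_notMem hCne hconv hcomp.isClosed h0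
  rw [inner_zero_left] at hsep
  have hφ_le : φ g ≤ sSup ((fun v => (inner ℝ v g : ℝ)) '' C) := (hrep g).2 ⟨C, hC, rfl⟩
  have hφ_nonneg : 0 ≤ φ g := hmin.nonneg_of_tendsto_slope_nhdsGT (hD g)
  linarith

/-- if `f` attains a local minimum at `x*` and has an upper exhauster (in the
sense of Dini) at `x*`, then every set of the exhauster contains the origin. -/
theorem local_min_upper_exhauster {n : ℕ} (f : EuclideanSpace ℝ (Fin n) → ℝ)
    (xs : EuclideanSpace ℝ (Fin n)) (φ : EuclideanSpace ℝ (Fin n) → ℝ)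
    (Estar : Set (Set (EuclideanSpace ℝ (Fin n))))
    (hmin : IsLocalMin f xs)
    (hD : ∀ g : EuclideanSpace ℝ (Fin n),
      Tendsto (fun α : ℝ => (f (xs + α • g) - f xs) / α) (𝓝[>] (0:ℝ)) (𝓝 (φ g)))
    (hne : Estar.Nonempty)
    (hsets : ∀ C ∈ Estar, C.Nonempty ∧ Convex ℝ C ∧ IsCompact C)
    (hrep : ∀ g : EuclideanSpace ℝ (Fin n),
      IsLeast ((fun C => sSup ((fun v => (inner ℝ v g : ℝ)) '' C)) '' Estar) (φ g)) :
    ∀ C ∈ Estar, (0 : EuclideanSpace ℝ (Fin n)) ∈ C :=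
  local_min_upper_exhauster_general f xs φ Estar hmin hD hsets hrep
end

section
/- If f : ℝⁿ → ℝ attains a local maximum at x* and f has an upper exhauster E* at x* in the sense of Dini, then for every g ∈ ℝⁿ there exists C ∈ E* with ⟨v, g⟩ ≥ 0 for all v ∈ C. -/
open Filter Topology Set

/-! At a local maximum every one-sided difference quotient `(f (x + t • v) - f x) / t`, `t > 0`, is
eventually nonpositive, so the Dini derivative `φ` is nonpositive in every direction. Applied to the
direction `-g`, the exhauster set `C` realising `φ (-g)` as `max_{v ∈ C} ⟨v, -g⟩` then satisfies
`⟨v, g⟩ ≥ 0` for all `v ∈ C`. -/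

theorem IsLocalMax.le_zero_of_tendsto_slope {E : Type*} [AddCommGroup E] [Module ℝ E]
    [TopologicalSpace E] [ContinuousAdd E] [ContinuousSMul ℝ E] {f : E → ℝ} {x v : E} {d : ℝ}
    (hmax : IsLocalMax f x)
    (hd : Tendsto (fun t : ℝ => (f (x + t • v) - f x) / t) (𝓝[>] 0) (𝓝 d)) : d ≤ 0 := by
  have hline : Tendsto (fun t : ℝ => x + t • v) (𝓝[>] 0) (𝓝 x) := by
    have : Continuous fun t : ℝ => x + t • v := by fun_prop
    simpa using (this.tendsto 0).mono_left nhdsWithin_le_nhds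
  refine le_of_tendsto hd ?_
  filter_upwards [hline.eventually hmax, self_mem_nhdsWithin] with t hle ht
  exact div_nonpos_of_nonpos_of_nonneg (sub_nonpos.mpr hle) (le_of_lt ht)

theorem local_max_upper_exhauster_general {n : ℕ} (f : EuclideanSpace ℝ (Fin n) → ℝ)
    (xs : EuclideanSpace ℝ (Fin n)) (φ : EuclideanSpace ℝ (Fin n) → ℝ)
    (Estar : Set (Set (EuclideanSpace ℝ (Fin n))))
    (hmax : IsLocalMax f xs)
    (hD : ∀ g : EuclideanSpace ℝ (Fin n),
      Tendsto (fun α : ℝ => (f (xs + α • g) - f xs) / α) (𝓝[>] (0:ℝ)) (𝓝 (φ g)))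
    (hsets : ∀ C ∈ Estar, C.Nonempty ∧ Convex ℝ C ∧ IsCompact C)
    (hrep : ∀ g : EuclideanSpace ℝ (Fin n),
      IsLeast ((fun C => sSup ((fun v => (inner ℝ v g : ℝ)) '' C)) '' Estar) (φ g)) :
    ∀ g : EuclideanSpace ℝ (Fin n), ∃ C ∈ Estar, ∀ v ∈ C, 0 ≤ (inner ℝ v g : ℝ) := by
  intro g
  obtain ⟨C, hC, hCφ⟩ := (hrep (-g)).1
  refine ⟨C, hC, fun v hv => ?_⟩
  have hbdd : BddAbove ((fun v => (inner ℝ v (-g) : ℝ)) '' C) :=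
    ((hsets C hC).2.2.image (by fun_prop)).bddAbove
  have hle : inner ℝ v (-g) ≤ φ (-g) := hCφ ▸ le_csSup hbdd ⟨v, hv, rfl⟩
  have hφ : φ (-g) ≤ 0 := hmax.le_zero_of_tendsto_slope (hD (-g))
  rw [inner_neg_right] at hle
  linarith

/-- if `f` attains a local maximum at `x*` and has an upper exhauster (in the
sense of Dini) at `x*`, then for every direction `g` there is a set `C` of the exhauster all
of whose elements have nonnegative inner product with `g`. -/
theorem local_max_upper_exhauster {n : ℕ} (f : EuclideanSpace ℝ (Fin n) → ℝ)
    (xs : EuclideanSpace ℝ (Fin n)) (φ : EuclideanSpace ℝ (Fin n) → ℝ)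
    (Estar : Set (Set (EuclideanSpace ℝ (Fin n))))
    (hmax : IsLocalMax f xs)
    (hD : ∀ g : EuclideanSpace ℝ (Fin n),
      Tendsto (fun α : ℝ => (f (xs + α • g) - f xs) / α) (𝓝[>] (0:ℝ)) (𝓝 (φ g)))
    (hne : Estar.Nonempty)
    (hsets : ∀ C ∈ Estar, C.Nonempty ∧ Convex ℝ C ∧ IsCompact C)
    (hrep : ∀ g : EuclideanSpace ℝ (Fin n),
      IsLeast ((fun C => sSup ((fun v => (inner ℝ v g : ℝ)) '' C)) '' Estar) (φ g)) :
    ∀ g : EuclideanSpace ℝ (Fin n), ∃ C ∈ Estar, ∀ v ∈ C, 0 ≤ (inner ℝ v g : ℝ) :=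
  local_max_upper_exhauster_general f xs φ Estar hmax hD hsets hrep
end

section
/- Let Ω ⊆ ℝⁿ, x ∈ Ω, and let h : ℝⁿ → ℝ be continuous. Define K_<(x) = {y : h(y) < 0}, K_≤(x) = {y : h(y) ≤ 0}, the cone of possible directions K_p(x) = {y : ∃ θ̄ > 0, ∀ θ ∈ [0,θ̄], x + θy ∈ Ω}, and the Bouligand cone K_ad(x) = {y : ∃ sequences θ_k ≥ 0, y_k with (θ_k, y_k) → (0+, y) and x + θ_k y_k ∈ Ω}. If h is the Hadamard directional derivative of u at x, where Ω = {z : u(z) ≤ 0} and u(x) = 0, then K_<(x) ⊆ K_p(x) ⊆ K_ad(x) ⊆ K_≤(x). -/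
open Filter Topology Set

/-!
Along any admissible pair `(θ, y') → (0⁺, y)` the difference quotients of `u` at `x` tend to
`h y`. If `h y < 0` they are negative for small `θ` on the ray `x + θ y`, which therefore stays in
`Ω`; along a Bouligand sequence they are `≤ 0`, so their limit `h y` is too.
-/

section HadamardCones

variable {E : Type*} [AddCommGroup E] [Module ℝ E] [TopologicalSpace E]

def HasHadamardDirDeriv (u : E → ℝ) (x y : E) (d : ℝ) : Prop :=
  Tendsto (fun p : ℝ × E => (u (x + p.1 • p.2) - u x) / p.1)
    (𝓝[Ioi (0 : ℝ) ×ˢ (univ : Set E)] (0, y)) (𝓝 d)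

/-- The cone of possible directions `K_p(x)` of `Ω`. -/
def possibleDirCone (Ω : Set E) (x : E) : Set E :=
  {y | ∃ θb : ℝ, 0 < θb ∧ ∀ θ ∈ Icc (0 : ℝ) θb, x + θ • y ∈ Ω}

/-- The Bouligand cone `K_ad(x)` of `Ω`, described by sequences. -/
def bouligandCone (Ω : Set E) (x : E) : Set E :=
  {y | ∃ θk : ℕ → ℝ, ∃ yk : ℕ → E, (∀ k, 0 < θk k) ∧ Tendsto θk atTop (𝓝 0) ∧
    Tendsto yk atTop (𝓝 y) ∧ ∀ k, x + θk k • yk k ∈ Ω}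

theorem HasHadamardDirDeriv.tendsto_comp {u : E → ℝ} {x y : E} {d : ℝ}
    (hu : HasHadamardDirDeriv u x y d) {ι : Type*} {l : Filter ι} {θ : ι → ℝ} {v : ι → E}
    (hθ : Tendsto θ l (𝓝[>] 0)) (hv : Tendsto v l (𝓝 y)) :
    Tendsto (fun i => (u (x + θ i • v i) - u x) / θ i) l (𝓝 d) := by
  have hpair : Tendsto (fun i => (θ i, v i)) l (𝓝[Ioi (0 : ℝ) ×ˢ (univ : Set E)] (0, y)) := by
    rw [nhdsWithin_prod_eq, nhdsWithin_univ]
    exact hθ.prodMk hv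
  simpa only [Function.comp_def] using hu.comp hpair

theorem mem_possibleDirCone_of_neg {u : E → ℝ} {x y : E} {d : ℝ} (hx : u x = 0)
    (hu : HasHadamardDirDeriv u x y d) (hd : d < 0) :
    y ∈ possibleDirCone {z | u z ≤ 0} x := by
  have hray := hu.tendsto_comp (l := 𝓝[>] 0) tendsto_id tendsto_const_nhds
  obtain ⟨ε, hε, hneg⟩ := mem_nhdsGT_iff_exists_Ioo_subset.mp (hray.eventually (gt_mem_nhds hd))
  refine ⟨ε / 2, half_pos hε, fun θ ⟨hθ0, hθε⟩ => ?_⟩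
  rcases hθ0.eq_or_lt with rfl | hθpos
  · simp [hx]
  · have hquot : (u (x + θ • y) - u x) / θ < 0 := hneg ⟨hθpos, by linarith⟩
    rw [hx, sub_zero, div_neg_iff] at hquot
    show u (x + θ • y) ≤ 0
    rcases hquot with ⟨_, hθneg⟩ | ⟨hneg', _⟩ <;> linarith

theorem possibleDirCone_subset_bouligandCone (Ω : Set E) (x : E) :
    possibleDirCone Ω x ⊆ bouligandCone Ω x := by
  rintro y ⟨θb, hθb, hmem⟩
  refine ⟨fun k => θb / (k + 1), fun _ => y, fun k => by positivity,
    tendsto_const_nhds.div_atTop (tendsto_atTop_add_const_right _ 1 tendsto_natCast_atTop_atTop),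
    tendsto_const_nhds, fun k => hmem _ ⟨by positivity, ?_⟩⟩
  exact div_le_self hθb.le (by linarith [k.cast_nonneg (α := ℝ)])

theorem nonpos_of_mem_bouligandCone {u : E → ℝ} {x y : E} {d : ℝ} (hx : u x = 0)
    (hu : HasHadamardDirDeriv u x y d) (hy : y ∈ bouligandCone {z | u z ≤ 0} x) : d ≤ 0 := by
  obtain ⟨θk, yk, hpos, hθ, hyk, hmem⟩ := hy
  have hθ' : Tendsto θk atTop (𝓝[>] 0) :=
    tendsto_nhdsWithin_iff.mpr ⟨hθ, Eventually.of_forall hpos⟩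
  refine le_of_tendsto' (hu.tendsto_comp hθ' hyk) fun k => ?_
  rw [hx, sub_zero]
  exact div_nonpos_of_nonpos_of_nonneg (hmem k) (hpos k).le

end HadamardCones

theorem cones_chain_general {n : ℕ} (u : EuclideanSpace ℝ (Fin n) → ℝ)
    (x : EuclideanSpace ℝ (Fin n)) (h : EuclideanSpace ℝ (Fin n) → ℝ)
    (hx : u x = 0)
    (hH : ∀ y : EuclideanSpace ℝ (Fin n),
      Tendsto (fun p : ℝ × EuclideanSpace ℝ (Fin n) => (u (x + p.1 • p.2) - u x) / p.1)
        (𝓝[(Set.Ioi (0:ℝ)) ×ˢ (Set.univ : Set (EuclideanSpace ℝ (Fin n)))] (0, y))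
        (𝓝 (h y))) :
    {y | h y < 0} ⊆
        {y : EuclideanSpace ℝ (Fin n) |
          ∃ θb : ℝ, 0 < θb ∧ ∀ θ ∈ Set.Icc (0:ℝ) θb, u (x + θ • y) ≤ 0} ∧
      {y : EuclideanSpace ℝ (Fin n) |
          ∃ θb : ℝ, 0 < θb ∧ ∀ θ ∈ Set.Icc (0:ℝ) θb, u (x + θ • y) ≤ 0} ⊆
        {y : EuclideanSpace ℝ (Fin n) |
          ∃ θk : ℕ → ℝ, ∃ yk : ℕ → EuclideanSpace ℝ (Fin n),
            (∀ k, 0 < θk k) ∧ Tendsto θk atTop (𝓝 0) ∧ Tendsto yk atTop (𝓝 y) ∧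
            ∀ k, u (x + θk k • yk k) ≤ 0} ∧
      {y : EuclideanSpace ℝ (Fin n) |
          ∃ θk : ℕ → ℝ, ∃ yk : ℕ → EuclideanSpace ℝ (Fin n),
            (∀ k, 0 < θk k) ∧ Tendsto θk atTop (𝓝 0) ∧ Tendsto yk atTop (𝓝 y) ∧
            ∀ k, u (x + θk k • yk k) ≤ 0} ⊆
        {y | h y ≤ 0} :=
  ⟨fun y hy => mem_possibleDirCone_of_neg hx (hH y) hy,
    possibleDirCone_subset_bouligandCone {z | u z ≤ 0} x,
    fun y hy => nonpos_of_mem_bouligandCone hx (hH y) hy⟩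

/-- the chain of conic approximations
`K_< ⊆ K_p ⊆ K_ad ⊆ K_≤` for `Ω = {z : u z ≤ 0}` at a point `x` with `u x = 0`, where `h` is
the (continuous) Hadamard directional derivative of `u` at `x`. -/
theorem cones_chain {n : ℕ} (u : EuclideanSpace ℝ (Fin n) → ℝ)
    (x : EuclideanSpace ℝ (Fin n)) (h : EuclideanSpace ℝ (Fin n) → ℝ)
    (hx : u x = 0) (hcont : Continuous h)
    (hH : ∀ y : EuclideanSpace ℝ (Fin n),
      Tendsto (fun p : ℝ × EuclideanSpace ℝ (Fin n) => (u (x + p.1 • p.2) - u x) / p.1)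
        (𝓝[(Set.Ioi (0:ℝ)) ×ˢ (Set.univ : Set (EuclideanSpace ℝ (Fin n)))] (0, y))
        (𝓝 (h y))) :
    {y | h y < 0} ⊆
        {y : EuclideanSpace ℝ (Fin n) |
          ∃ θb : ℝ, 0 < θb ∧ ∀ θ ∈ Set.Icc (0:ℝ) θb, u (x + θ • y) ≤ 0} ∧
      {y : EuclideanSpace ℝ (Fin n) |
          ∃ θb : ℝ, 0 < θb ∧ ∀ θ ∈ Set.Icc (0:ℝ) θb, u (x + θ • y) ≤ 0} ⊆
        {y : EuclideanSpace ℝ (Fin n) |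
          ∃ θk : ℕ → ℝ, ∃ yk : ℕ → EuclideanSpace ℝ (Fin n),
            (∀ k, 0 < θk k) ∧ Tendsto θk atTop (𝓝 0) ∧ Tendsto yk atTop (𝓝 y) ∧
            ∀ k, u (x + θk k • yk k) ≤ 0} ∧
      {y : EuclideanSpace ℝ (Fin n) |
          ∃ θk : ℕ → ℝ, ∃ yk : ℕ → EuclideanSpace ℝ (Fin n),
            (∀ k, 0 < θk k) ∧ Tendsto θk atTop (𝓝 0) ∧ Tendsto yk atTop (𝓝 y) ∧
            ∀ k, u (x + θk k • yk k) ≤ 0} ⊆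
        {y | h y ≤ 0} :=
  cones_chain_general u x h hx hH
end

section
/- Suppose x* is a local minimum of f on Ω = {x : u(x) ≤ 0}, u(x*) = 0, both f and u are Hadamard directionally differentiable at x*, the regularity condition cl{g : u'_H(x*,g) < 0} = {g : u'_H(x*,g) ≤ 0} holds, E_*(f) is a lower exhauster of f at x*, and E*(u) is an upper exhauster of u at x*. Then ⋃_{C ∈ E*(u)} [−K⁺(C)] ⊆ ⋃_{C ∈ E_*(f)} K⁺(C). -/
open Set Pointwise

/-- The conic hull `cone{C}` of a set `C`. -/
def coneHull {n : ℕ} (C : Set (EuclideanSpace ℝ (Fin n))) : Set (EuclideanSpace ℝ (Fin n)) :=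
  {c | ∃ t : ℝ, 0 ≤ t ∧ ∃ w ∈ C, c = t • w}

/-- The conjugate (dual) cone `K⁺(C)` of the conic hull of `C`. -/
def Kplus {n : ℕ} (C : Set (EuclideanSpace ℝ (Fin n))) : Set (EuclideanSpace ℝ (Fin n)) :=
  {y | ∀ v ∈ coneHull C, 0 ≤ (inner ℝ v y : ℝ)}

/-! If `u'_H(x*, g) < 0`, the points `x* + t g` are feasible for small `t > 0`, so local
minimality forces `f'_H(x*, g) ≥ 0`. A Hadamard directional derivative is continuous in the
direction, so the regularity condition extends this to every `g` with `u'_H(x*, g) ≤ 0`.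
For `y ∈ -K⁺(C)` with `C ∈ E*(u)` the upper exhauster gives `u'_H(x*, y) ≤ max_{v ∈ C} ⟨v, y⟩ ≤ 0`,
hence `f'_H(x*, y) ≥ 0`, and a set `C' ∈ E_*(f)` attaining the maximum in the lower exhauster
satisfies `min_{w ∈ C'} ⟨w, y⟩ ≥ 0`, that is, `y ∈ K⁺(C')`. -/

open Filter Topology

theorem continuous_of_tendsto_nhdsWithin_Ioi_prod {E Y : Type*} [TopologicalSpace E]
    [TopologicalSpace Y] [T3Space Y] {F : ℝ × E → Y} {φ : E → Y}
    (hF : ∀ g, Tendsto F (𝓝[Ioi 0 ×ˢ univ] (0, g)) (𝓝 (φ g))) : Continuous φ := by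
  have hcl : ∀ g : E, ((0 : ℝ), g) ∈ closure (Ioi (0 : ℝ) ×ˢ (univ : Set E)) := fun g => by
    simp [closure_prod_eq]
  have hext : ContinuousOn (extendFrom (Ioi 0 ×ˢ univ) F) (range fun g : E => ((0 : ℝ), g)) :=
    continuousOn_extendFrom (by rintro _ ⟨g, rfl⟩; exact hcl g)
      (by rintro _ ⟨g, rfl⟩; exact ⟨φ g, hF g⟩)
  have hφ : φ = extendFrom (Ioi 0 ×ˢ univ) F ∘ fun g => ((0 : ℝ), g) :=
    funext fun g => (extendFrom_eq (hcl g) (hF g)).symm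
  rw [hφ]
  exact hext.comp_continuous (by fun_prop) fun g => mem_range_self g

theorem Filter.Tendsto.nhdsWithin_Ioi_of_nhdsWithin_Ioi_prod {E α : Type*} [TopologicalSpace E]
    {F : ℝ × E → α} {g : E} {l : Filter α} (hF : Tendsto F (𝓝[Ioi 0 ×ˢ univ] (0, g)) l) :
    Tendsto (fun t : ℝ => F (t, g)) (𝓝[>] 0) l :=
  hF.comp <| tendsto_nhdsWithin_of_tendsto_nhds_of_eventually_within _
    ((tendsto_nhdsWithin_of_tendsto_nhds tendsto_id).prodMk_nhds tendsto_const_nhds)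
    (eventually_nhdsWithin_of_forall fun _ ht => mk_mem_prod ht (mem_univ g))

theorem nonneg_of_isLocalMinOn_of_dirDeriv_neg {E : Type*} [AddCommGroup E] [Module ℝ E]
    [TopologicalSpace E] [ContinuousAdd E] [ContinuousSMul ℝ E] {f u : E → ℝ} {xs g : E}
    {a b : ℝ} (hmin : IsLocalMinOn f {x | u x ≤ 0} xs) (hxs : u xs ≤ 0)
    (hf : Tendsto (fun t : ℝ => (f (xs + t • g) - f xs) / t) (𝓝[>] 0) (𝓝 a))
    (hu : Tendsto (fun t : ℝ => (u (xs + t • g) - u xs) / t) (𝓝[>] 0) (𝓝 b)) (hb : b < 0) :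
    0 ≤ a := by
  have hfeas : ∀ᶠ t : ℝ in 𝓝[>] 0, u (xs + t • g) ≤ 0 := by
    filter_upwards [hu.eventually (eventually_lt_nhds hb), self_mem_nhdsWithin] with t ht ht0
    linarith [(div_lt_iff₀ ht0).mp ht]
  have hray : Tendsto (fun t : ℝ => xs + t • g) (𝓝[>] 0) (𝓝[{x | u x ≤ 0}] xs) := by
    refine tendsto_nhdsWithin_of_tendsto_nhds_of_eventually_within _ ?_ hfeas
    exact ((continuous_const.add (continuous_id.smul continuous_const)).tendsto' 0 xs
      (by simp)).mono_left nhdsWithin_le_nhds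
  refine ge_of_tendsto hf ?_
  filter_upwards [hray.eventually hmin, self_mem_nhdsWithin] with t ht ht0
  exact div_nonneg (sub_nonneg.mpr ht) (le_of_lt ht0)

theorem mem_Kplus_iff {n : ℕ} {C : Set (EuclideanSpace ℝ (Fin n))} {y : EuclideanSpace ℝ (Fin n)} :
    y ∈ Kplus C ↔ ∀ w ∈ C, 0 ≤ inner ℝ w y := by
  refine ⟨fun h w hw => by simpa using h w ⟨1, zero_le_one, w, hw, (one_smul ℝ w).symm⟩, ?_⟩
  rintro h _ ⟨t, ht, w, hw, rfl⟩
  rw [real_inner_smul_left]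
  exact mul_nonneg ht (h w hw)

theorem sSup_inner_nonpos_of_neg_mem_Kplus {n : ℕ} {C : Set (EuclideanSpace ℝ (Fin n))}
    {y : EuclideanSpace ℝ (Fin n)} (hy : -y ∈ Kplus C) :
    sSup ((fun v => inner ℝ v y) '' C) ≤ 0 := by
  refine Real.sSup_nonpos ?_
  rintro _ ⟨v, hv, rfl⟩
  simpa [inner_neg_right] using mem_Kplus_iff.mp hy v hv

theorem mem_Kplus_of_nonneg_sInf_inner {n : ℕ} {C : Set (EuclideanSpace ℝ (Fin n))}
    (hC : IsCompact C) {y : EuclideanSpace ℝ (Fin n)}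
    (hy : 0 ≤ sInf ((fun w => inner ℝ w y) '' C)) : y ∈ Kplus C :=
  mem_Kplus_iff.mpr fun w hw => hy.trans <|
    csInf_le (hC.image (by fun_prop)).bddBelow (mem_image_of_mem _ hw)

theorem min_cond_lower_upper_general {n : ℕ}
(f u : EuclideanSpace ℝ (Fin n) → ℝ) (xs : EuclideanSpace ℝ (Fin n))
    (φf φu : EuclideanSpace ℝ (Fin n) → ℝ)
    (hxs : u xs = 0)
    (hf : ∀ g : EuclideanSpace ℝ (Fin n),
      Filter.Tendsto
        (fun p : ℝ × EuclideanSpace ℝ (Fin n) => (f (xs + p.1 • p.2) - f xs) / p.1)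
        (nhdsWithin (0, g) ((Set.Ioi (0:ℝ)) ×ˢ (Set.univ : Set (EuclideanSpace ℝ (Fin n)))))
        (nhds (φf g)))
    (hu : ∀ g : EuclideanSpace ℝ (Fin n),
      Filter.Tendsto
        (fun p : ℝ × EuclideanSpace ℝ (Fin n) => (u (xs + p.1 • p.2) - u xs) / p.1)
        (nhdsWithin (0, g) ((Set.Ioi (0:ℝ)) ×ˢ (Set.univ : Set (EuclideanSpace ℝ (Fin n)))))
        (nhds (φu g)))
    (hreg : closure {g | φu g < 0} = {g | φu g ≤ 0})
    (Ef Eu : Set (Set (EuclideanSpace ℝ (Fin n))))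
    (hEfsets : ∀ C ∈ Ef, C.Nonempty ∧ Convex ℝ C ∧ IsCompact C)
    (hmin : IsLocalMinOn f {x | u x ≤ 0} xs)
    (hEf : ∀ g : EuclideanSpace ℝ (Fin n),
      IsGreatest ((fun C => sInf ((fun w => (inner ℝ w g : ℝ)) '' C)) '' Ef) (φf g))
    (hEu : ∀ g : EuclideanSpace ℝ (Fin n),
      IsLeast ((fun C => sSup ((fun v => (inner ℝ v g : ℝ)) '' C)) '' Eu) (φu g)) :
    (⋃ C ∈ Eu, -(Kplus C)) ⊆ ⋃ C ∈ Ef, Kplus C := by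
  have hdescent : ∀ g, φu g < 0 → 0 ≤ φf g := fun g hg =>
    nonneg_of_isLocalMinOn_of_dirDeriv_neg hmin hxs.le
      (hf g).nhdsWithin_Ioi_of_nhdsWithin_Ioi_prod (hu g).nhdsWithin_Ioi_of_nhdsWithin_Ioi_prod hg
  have hclosed : IsClosed {g | 0 ≤ φf g} :=
    isClosed_le continuous_const (continuous_of_tendsto_nhdsWithin_Ioi_prod hf)
  intro y hy
  obtain ⟨C, hC, hyC⟩ := mem_iUnion₂.mp hy
  have hφu : φu y ≤ 0 :=
    ((hEu y).2 (mem_image_of_mem _ hC)).trans (sSup_inner_nonpos_of_neg_mem_Kplus hyC)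
  have hφf : 0 ≤ φf y :=
    closure_minimal hdescent hclosed (hreg.symm ▸ hφu : y ∈ closure {g | φu g < 0})
  obtain ⟨D, hD, hDy⟩ := (hEf y).1
  exact mem_iUnion₂.mpr ⟨D, hD, mem_Kplus_of_nonneg_sInf_inner (hEfsets D hD).2.2 (hφf.trans_eq hDy.symm)⟩

/-- necessary condition for a constrained local minimum in terms of a lower
exhauster of `f` and an upper exhauster of `u`. -/
theorem min_cond_lower_upper {n : ℕ}
(f u : EuclideanSpace ℝ (Fin n) → ℝ) (xs : EuclideanSpace ℝ (Fin n))
    (φf φu : EuclideanSpace ℝ (Fin n) → ℝ)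
    (hxs : u xs = 0)
    (hf : ∀ g : EuclideanSpace ℝ (Fin n),
      Filter.Tendsto
        (fun p : ℝ × EuclideanSpace ℝ (Fin n) => (f (xs + p.1 • p.2) - f xs) / p.1)
        (nhdsWithin (0, g) ((Set.Ioi (0:ℝ)) ×ˢ (Set.univ : Set (EuclideanSpace ℝ (Fin n)))))
        (nhds (φf g)))
    (hu : ∀ g : EuclideanSpace ℝ (Fin n),
      Filter.Tendsto
        (fun p : ℝ × EuclideanSpace ℝ (Fin n) => (u (xs + p.1 • p.2) - u xs) / p.1)
        (nhdsWithin (0, g) ((Set.Ioi (0:ℝ)) ×ˢ (Set.univ : Set (EuclideanSpace ℝ (Fin n)))))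
        (nhds (φu g)))
    (hreg : closure {g | φu g < 0} = {g | φu g ≤ 0})
    (Ef Eu : Set (Set (EuclideanSpace ℝ (Fin n))))
    (hEfne : Ef.Nonempty) (hEune : Eu.Nonempty)
    (hEfsets : ∀ C ∈ Ef, C.Nonempty ∧ Convex ℝ C ∧ IsCompact C)
    (hEusets : ∀ C ∈ Eu, C.Nonempty ∧ Convex ℝ C ∧ IsCompact C)
    (hEfbd : ∃ R : ℝ, ∀ C ∈ Ef, C ⊆ Metric.closedBall 0 R)
    (hEubd : ∃ R : ℝ, ∀ C ∈ Eu, C ⊆ Metric.closedBall 0 R)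
    (hmin : IsLocalMinOn f {x | u x ≤ 0} xs)
    (hEf : ∀ g : EuclideanSpace ℝ (Fin n),
      IsGreatest ((fun C => sInf ((fun w => (inner ℝ w g : ℝ)) '' C)) '' Ef) (φf g))
    (hEu : ∀ g : EuclideanSpace ℝ (Fin n),
      IsLeast ((fun C => sSup ((fun v => (inner ℝ v g : ℝ)) '' C)) '' Eu) (φu g)) :
    (⋃ C ∈ Eu, -(Kplus C)) ⊆ ⋃ C ∈ Ef, Kplus C :=
  min_cond_lower_upper_general f u xs φf φu hxs hf hu hreg Ef Eu hEfsets hmin hEf hEu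
end

section
/- Suppose x* is a local minimum of f on Ω = {x : u(x) ≤ 0}, u(x*) = 0, both f and u are Hadamard directionally differentiable at x*, the regularity condition cl{g : u'_H(x*,g) < 0} = {g : u'_H(x*,g) ≤ 0} holds, E_*(f) and E_*(u) are lower exhausters of f and u at x*. Then ⋂_{C ∈ E_*(u)} cl(ℝⁿ \ K⁺(C)) ⊆ ⋃_{C ∈ E_*(f)} K⁺(C). -/
open Set Pointwise

/-- The min value `min_{w ∈ C} ⟨w, g⟩`. -/
noncomputable def mval {n : ℕ} (C : Set (EuclideanSpace ℝ (Fin n)))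
    (g : EuclideanSpace ℝ (Fin n)) : ℝ :=
  sInf ((fun w => (inner ℝ w g : ℝ)) '' C)

lemma mval_bdd {n : ℕ} {C : Set (EuclideanSpace ℝ (Fin n))} (hcpt : IsCompact C)
    (g : EuclideanSpace ℝ (Fin n)) : BddBelow ((fun w => (inner ℝ w g : ℝ)) '' C) :=
  (hcpt.image (Continuous.inner continuous_id continuous_const)).bddBelow

lemma mval_est {n : ℕ} {C : Set (EuclideanSpace ℝ (Fin n))} {R : ℝ}
    (hne : C.Nonempty) (hcpt : IsCompact C) (hR : C ⊆ Metric.closedBall 0 R)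
    (a b : EuclideanSpace ℝ (Fin n)) : mval C a ≤ mval C b + R * dist a b := by
  have key : ∀ w ∈ C, mval C a - R * dist a b ≤ (inner ℝ w b : ℝ) := by
    intro w hw
    have h1 : mval C a ≤ (inner ℝ w a : ℝ) := csInf_le (mval_bdd hcpt a) ⟨w, hw, rfl⟩
    have h2 : (inner ℝ w a : ℝ) - (inner ℝ w b : ℝ) = (inner ℝ w (a - b) : ℝ) := by
      rw [inner_sub_right]
    have h3 : (inner ℝ w (a - b) : ℝ) ≤ ‖w‖ * ‖a - b‖ := real_inner_le_norm w (a - b)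
    have h4 : ‖w‖ ≤ R := by simpa using hR hw
    have h5 : ‖a - b‖ = dist a b := (dist_eq_norm a b).symm
    nlinarith [norm_nonneg (a - b), norm_nonneg w]
  have h : mval C a - R * dist a b ≤ mval C b :=
    le_csInf (hne.image _) (fun x hx => by obtain ⟨w, hw, rfl⟩ := hx; exact key w hw)
  linarith

lemma le_closure_aux {E : Type*} [PseudoMetricSpace E] {φ : E → ℝ} {S : Set E} {R : ℝ}
    (hlip : ∀ a b : E, φ a ≤ φ b + R * dist a b)
    (hS : ∀ x ∈ S, φ x ≤ 0) {x : E} (hx : x ∈ closure S) : φ x ≤ 0 := by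
  by_contra h
  push_neg at h
  have hR : 0 ≤ R := by
    by_contra hR
    push_neg at hR
    obtain ⟨b, hbS, hb⟩ := Metric.mem_closure_iff.mp hx 1 one_pos
    have h1 := hlip x b
    have h2 := hS b hbS
    nlinarith [dist_nonneg (x := x) (y := b)]
  obtain ⟨b, hbS, hb⟩ := Metric.mem_closure_iff.mp hx (φ x / (R + 1)) (by positivity)
  have h1 := hlip x b
  have h2 := hS b hbS
  have h3 : R * dist x b ≤ R * (φ x / (R + 1)) :=
    mul_le_mul_of_nonneg_left (le_of_lt hb) hR
  have h4 : R * (φ x / (R + 1)) < φ x := by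
    rw [mul_div_assoc', div_lt_iff₀ (by linarith)]
    nlinarith
  linarith

set_option maxHeartbeats 1000000 in
lemma path_tendsto {n : ℕ} {φ : EuclideanSpace ℝ (Fin n) → ℝ} {xs : EuclideanSpace ℝ (Fin n)}
    {L : ℝ} (g : EuclideanSpace ℝ (Fin n))
    (h : Filter.Tendsto (fun p : ℝ × EuclideanSpace ℝ (Fin n) => (φ (xs + p.1 • p.2) - φ xs) / p.1)
      (nhdsWithin (0, g) ((Set.Ioi (0:ℝ)) ×ˢ (Set.univ : Set (EuclideanSpace ℝ (Fin n)))))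
      (nhds L)) :
    Filter.Tendsto (fun t : ℝ => (φ (xs + t • g) - φ xs) / t)
      (nhdsWithin (0:ℝ) (Set.Ioi (0:ℝ))) (nhds L) := by
  have hpath : Filter.Tendsto (fun t : ℝ => ((t, g) : ℝ × EuclideanSpace ℝ (Fin n)))
      (nhdsWithin (0:ℝ) (Set.Ioi (0:ℝ)))
      (nhdsWithin ((0:ℝ), g) ((Set.Ioi (0:ℝ)) ×ˢ (Set.univ : Set (EuclideanSpace ℝ (Fin n))))) := by
    apply tendsto_nhdsWithin_of_tendsto_nhds_of_eventually_within
    · exact ((continuous_id.prodMk continuous_const).tendsto (0:ℝ)).mono_left nhdsWithin_le_nhds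
    · filter_upwards [self_mem_nhdsWithin] with t ht
      exact ⟨ht, Set.mem_univ g⟩
  exact (h.comp hpath).congr (fun t => rfl)

/-- necessary condition for a constrained local minimum in terms of lower
exhausters of both `f` and `u`. -/
theorem min_cond_lower_lower {n : ℕ}
(f u : EuclideanSpace ℝ (Fin n) → ℝ) (xs : EuclideanSpace ℝ (Fin n))
    (φf φu : EuclideanSpace ℝ (Fin n) → ℝ)
    (hxs : u xs = 0)
    (hf : ∀ g : EuclideanSpace ℝ (Fin n),
      Filter.Tendsto
        (fun p : ℝ × EuclideanSpace ℝ (Fin n) => (f (xs + p.1 • p.2) - f xs) / p.1)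
        (nhdsWithin (0, g) ((Set.Ioi (0:ℝ)) ×ˢ (Set.univ : Set (EuclideanSpace ℝ (Fin n)))))
        (nhds (φf g)))
    (hu : ∀ g : EuclideanSpace ℝ (Fin n),
      Filter.Tendsto
        (fun p : ℝ × EuclideanSpace ℝ (Fin n) => (u (xs + p.1 • p.2) - u xs) / p.1)
        (nhdsWithin (0, g) ((Set.Ioi (0:ℝ)) ×ˢ (Set.univ : Set (EuclideanSpace ℝ (Fin n)))))
        (nhds (φu g)))
    (hreg : closure {g | φu g < 0} = {g | φu g ≤ 0})
    (Ef Eu : Set (Set (EuclideanSpace ℝ (Fin n))))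
    (hEfne : Ef.Nonempty) (hEune : Eu.Nonempty)
    (hEfsets : ∀ C ∈ Ef, C.Nonempty ∧ Convex ℝ C ∧ IsCompact C)
    (hEusets : ∀ C ∈ Eu, C.Nonempty ∧ Convex ℝ C ∧ IsCompact C)
    (hEfbd : ∃ R : ℝ, ∀ C ∈ Ef, C ⊆ Metric.closedBall 0 R)
    (hEubd : ∃ R : ℝ, ∀ C ∈ Eu, C ⊆ Metric.closedBall 0 R)
    (hmin : IsLocalMinOn f {x | u x ≤ 0} xs)
    (hEf : ∀ g : EuclideanSpace ℝ (Fin n),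
      IsGreatest ((fun C => sInf ((fun w => (inner ℝ w g : ℝ)) '' C)) '' Ef) (φf g))
    (hEu : ∀ g : EuclideanSpace ℝ (Fin n),
      IsGreatest ((fun C => sInf ((fun w => (inner ℝ w g : ℝ)) '' C)) '' Eu) (φu g)) :
    (⋂ C ∈ Eu, closure ((Set.univ : Set (EuclideanSpace ℝ (Fin n))) \ Kplus C)) ⊆
      ⋃ C ∈ Ef, Kplus C := by
  obtain ⟨Rf, hRf⟩ := hEfbd
  obtain ⟨Ru, hRu⟩ := hEubd
  intro g hg
  simp only [Set.mem_iInter] at hg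
  -- Step A: for every C ∈ Eu, mval C g ≤ 0
  have stepA : ∀ C ∈ Eu, mval C g ≤ 0 := by
    intro C hC
    obtain ⟨hCne, _, hCcpt⟩ := hEusets C hC
    have hsub : ∀ x ∈ (Set.univ : Set (EuclideanSpace ℝ (Fin n))) \ Kplus C, mval C x ≤ 0 := by
      rintro x ⟨-, hxK⟩
      simp only [Kplus, Set.mem_setOf_eq, not_forall] at hxK
      obtain ⟨v, hv, hneg⟩ := hxK
      push_neg at hneg
      obtain ⟨t, ht, w, hw, rfl⟩ := hv
      have hinner : (inner ℝ (t • w) x : ℝ) = t * (inner ℝ w x : ℝ) := real_inner_smul_left w x t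
      have hwx : (inner ℝ w x : ℝ) < 0 := by
        by_contra hc
        push_neg at hc
        have := mul_nonneg ht hc
        rw [← hinner] at this
        linarith
      have := csInf_le (mval_bdd hCcpt x) (⟨w, hw, rfl⟩ :
        (inner ℝ w x : ℝ) ∈ (fun w => (inner ℝ w x : ℝ)) '' C)
      exact le_of_lt (lt_of_le_of_lt this hwx)
    exact le_closure_aux (fun a b => mval_est hCne hCcpt (hRu C hC) a b) hsub (hg C hC)
  -- Step B: φu g ≤ 0
  have stepB : φu g ≤ 0 := by
    obtain ⟨C, hC, hCeq⟩ := (hEu g).1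
    rw [← hCeq]
    exact stepA C hC
  -- Step C: φf is nonnegative on {x | φu x < 0}
  have stepC : ∀ x, φu x < 0 → 0 ≤ φf x := by
    intro x hx
    have hux := path_tendsto x (hu x)
    have hfx := path_tendsto x (hf x)
    have hevu : ∀ᶠ t in nhdsWithin (0:ℝ) (Set.Ioi 0), u (xs + t • x) < 0 := by
      have h1 : ∀ᶠ t in nhdsWithin (0:ℝ) (Set.Ioi 0),
          (u (xs + t • x) - u xs) / t < 0 := hux.eventually_lt_const hx
      filter_upwards [h1, self_mem_nhdsWithin] with t h1t ht
      rw [hxs, sub_zero] at h1t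
      rcases div_neg_iff.mp h1t with ⟨_, h⟩ | ⟨h, _⟩
      · exact absurd ht (by simp; linarith)
      · exact h
    have hpathΩ : Filter.Tendsto (fun t : ℝ => xs + t • x) (nhdsWithin (0:ℝ) (Set.Ioi 0))
        (nhdsWithin xs {y | u y ≤ 0}) := by
      apply tendsto_nhdsWithin_of_tendsto_nhds_of_eventually_within
      · have hcont : Filter.Tendsto (fun t : ℝ => xs + t • x) (nhds (0:ℝ))
            (nhds (xs + (0:ℝ) • x)) :=
          ((continuous_const.add (continuous_id.smul continuous_const)).tendsto (0:ℝ))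
        rw [zero_smul, add_zero] at hcont
        exact hcont.mono_left nhdsWithin_le_nhds
      · exact hevu.mono fun t ht => le_of_lt ht
    have hevf : ∀ᶠ t in nhdsWithin (0:ℝ) (Set.Ioi 0), f xs ≤ f (xs + t • x) :=
      hpathΩ.eventually hmin
    have hq : ∀ᶠ t in nhdsWithin (0:ℝ) (Set.Ioi 0), 0 ≤ (f (xs + t • x) - f xs) / t := by
      filter_upwards [hevf, self_mem_nhdsWithin] with t h1 ht
      exact div_nonneg (by linarith) (le_of_lt ht)
    exact ge_of_tendsto hfx hq
  -- Step D: 0 ≤ φf g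
  have hlipf : ∀ a b : EuclideanSpace ℝ (Fin n), φf a ≤ φf b + Rf * dist a b := by
    intro a b
    obtain ⟨C, hC, hCeq⟩ := (hEf a).1
    obtain ⟨hCne, _, hCcpt⟩ := hEfsets C hC
    have h1 : mval C a ≤ mval C b + Rf * dist a b := mval_est hCne hCcpt (hRf C hC) a b
    have h2 : mval C b ≤ φf b := (hEf b).2 ⟨C, hC, rfl⟩
    rw [← hCeq]
    calc mval C a ≤ mval C b + Rf * dist a b := h1
      _ ≤ φf b + Rf * dist a b := by linarith
  have stepD : 0 ≤ φf g := by
    have hgcl : g ∈ closure {x | φu x < 0} := by rw [hreg]; exact stepB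
    have := le_closure_aux (φ := fun x => -φf x) (R := Rf)
      (fun a b => by have := hlipf b a; rw [dist_comm] at this; simp; linarith)
      (fun x hx => by simpa using stepC x hx) hgcl
    simpa using this
  -- Step E: conclude
  obtain ⟨C, hC, hCeq⟩ := (hEf g).1
  obtain ⟨hCne, _, hCcpt⟩ := hEfsets C hC
  have hm : 0 ≤ mval C g := by rw [show mval C g = φf g from hCeq]; exact stepD
  apply Set.mem_iUnion₂.mpr
  refine ⟨C, hC, ?_⟩
  rintro v ⟨t, ht, w, hw, rfl⟩
  have h1 : mval C g ≤ (inner ℝ w g : ℝ) := csInf_le (mval_bdd hCcpt g) ⟨w, hw, rfl⟩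
  have h2 : (inner ℝ (t • w) g : ℝ) = t * (inner ℝ w g : ℝ) := real_inner_smul_left w g t
  rw [h2]
  exact mul_nonneg ht (le_trans hm h1)
end

section
/- Suppose x* is a local maximum of f on Ω = {x : u(x) ≤ 0}, u(x*) = 0, both f and u are Hadamard directionally differentiable at x*, the regularity condition cl{g : u'_H(x*,g) < 0} = {g : u'_H(x*,g) ≤ 0} holds, and E*(f), E*(u) are upper exhausters of f and u at x*. Then ⋃_{C ∈ E*(u)} [−K⁺(C)] ⊆ ⋃_{C ∈ E*(f)} [−K⁺(C)]. -/
open Set Pointwise Filter Topology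

variable {n : ℕ}

section AuxLemmas

lemma mem_neg_Kplus_iff {n : ℕ} (C : Set (EuclideanSpace ℝ (Fin n)))
    (y : EuclideanSpace ℝ (Fin n)) :
    y ∈ -(Kplus C) ↔ ∀ v ∈ C, (inner ℝ v y : ℝ) ≤ 0 := by
  rw [Set.mem_neg]
  constructor
  · intro h v hv
    have := h v ⟨1, zero_le_one, v, hv, (one_smul ℝ v).symm⟩
    rw [inner_neg_right] at this
    linarith
  · rintro h c ⟨t, ht, w, hw, rfl⟩
    rw [inner_neg_right, real_inner_smul_left]
    nlinarith [h w hw]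

-- membership union characterization
lemma mem_union_neg_Kplus {n : ℕ} (E : Set (Set (EuclideanSpace ℝ (Fin n))))
    (y : EuclideanSpace ℝ (Fin n)) :
    y ∈ (⋃ C ∈ E, -(Kplus C)) ↔ ∃ C ∈ E, ∀ v ∈ C, (inner ℝ v y : ℝ) ≤ 0 := by
  simp only [Set.mem_iUnion, mem_neg_Kplus_iff, exists_prop]

lemma phi_nonpos_iff {n : ℕ} (E : Set (Set (EuclideanSpace ℝ (Fin n))))
    (φ : EuclideanSpace ℝ (Fin n) → ℝ)
    (hEsets : ∀ C ∈ E, C.Nonempty ∧ Convex ℝ C ∧ IsCompact C)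
    (hE : ∀ g : EuclideanSpace ℝ (Fin n),
      IsLeast ((fun C => sSup ((fun v => (inner ℝ v g : ℝ)) '' C)) '' E) (φ g))
    (g : EuclideanSpace ℝ (Fin n)) :
    φ g ≤ 0 ↔ ∃ C ∈ E, ∀ v ∈ C, (inner ℝ v g : ℝ) ≤ 0 := by
  constructor
  · intro h
    obtain ⟨C, hC, hCs⟩ := (hE g).1
    refine ⟨C, hC, fun v hv => ?_⟩
    obtain ⟨hne, _, hcomp⟩ := hEsets C hC
    have hbdd : BddAbove ((fun v => (inner ℝ v g : ℝ)) '' C) :=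
      (hcomp.image (Continuous.inner continuous_id continuous_const)).bddAbove
    have h1 := le_csSup hbdd (Set.mem_image_of_mem _ hv)
    simp only at hCs
    rw [hCs] at h1
    linarith
  · rintro ⟨C, hC, hv⟩
    have hle : φ g ≤ sSup ((fun v => (inner ℝ v g : ℝ)) '' C) :=
      (hE g).2 (Set.mem_image_of_mem _ hC)
    have : sSup ((fun v => (inner ℝ v g : ℝ)) '' C) ≤ 0 := by
      apply csSup_le ((hEsets C hC).1.image _)
      rintro x ⟨v, hvC, rfl⟩
      exact hv v hvC
    linarith

lemma phi_lip (E : Set (Set (EuclideanSpace ℝ (Fin n))))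
    (φ : EuclideanSpace ℝ (Fin n) → ℝ) (R : ℝ)
    (hEsets : ∀ C ∈ E, C.Nonempty ∧ Convex ℝ C ∧ IsCompact C)
    (hR : ∀ C ∈ E, C ⊆ Metric.closedBall 0 R)
    (hE : ∀ g : EuclideanSpace ℝ (Fin n),
      IsLeast ((fun C => sSup ((fun v => (inner ℝ v g : ℝ)) '' C)) '' E) (φ g))
    (g1 g2 : EuclideanSpace ℝ (Fin n)) :
    φ g1 ≤ φ g2 + R * ‖g1 - g2‖ := by
  obtain ⟨C, hC, hCs⟩ := (hE g2).1
  simp only at hCs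
  obtain ⟨hne, -, hcomp⟩ := hEsets C hC
  have hbdd : BddAbove ((fun v => (inner ℝ v g2 : ℝ)) '' C) :=
    (hcomp.image (Continuous.inner continuous_id continuous_const)).bddAbove
  have hle : φ g1 ≤ sSup ((fun v => (inner ℝ v g1 : ℝ)) '' C) :=
    (hE g1).2 (Set.mem_image_of_mem _ hC)
  refine hle.trans (csSup_le (hne.image _) ?_)
  rintro x ⟨v, hvC, rfl⟩
  have h1 : (inner ℝ v g1 : ℝ) = (inner ℝ v g2 : ℝ) + (inner ℝ v (g1 - g2) : ℝ) := by
    rw [inner_sub_right]; ring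
  have h2 : (inner ℝ v g2 : ℝ) ≤ φ g2 := by
    rw [← hCs]; exact le_csSup hbdd (Set.mem_image_of_mem _ hvC)
  have h3 : (inner ℝ v (g1 - g2) : ℝ) ≤ ‖v‖ * ‖g1 - g2‖ := real_inner_le_norm v _
  have h4 : ‖v‖ ≤ R := by
    have := hR C hC hvC
    simpa [Metric.mem_closedBall, dist_eq_norm] using this
  nlinarith [norm_nonneg (g1 - g2)]

lemma phi_cont (E : Set (Set (EuclideanSpace ℝ (Fin n))))
    (φ : EuclideanSpace ℝ (Fin n) → ℝ) (R : ℝ)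
    (hEsets : ∀ C ∈ E, C.Nonempty ∧ Convex ℝ C ∧ IsCompact C)
    (hR : ∀ C ∈ E, C ⊆ Metric.closedBall 0 R)
    (hE : ∀ g : EuclideanSpace ℝ (Fin n),
      IsLeast ((fun C => sSup ((fun v => (inner ℝ v g : ℝ)) '' C)) '' E) (φ g)) :
    Continuous φ := by
  have key := phi_lip E φ R hEsets hR hE
  have hlip : LipschitzWith (Real.toNNReal R) φ := by
    apply LipschitzWith.of_dist_le_mul
    intro g1 g2
    rw [Real.dist_eq, dist_eq_norm, abs_sub_le_iff]
    have k1 := key g1 g2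
    have k2 := key g2 g1
    rw [norm_sub_rev g2 g1] at k2
    have hRle : R ≤ (Real.toNNReal R : ℝ) := Real.le_coe_toNNReal R
    have hn : (0:ℝ) ≤ ‖g1 - g2‖ := norm_nonneg _
    constructor <;> nlinarith
  exact hlip.continuous

lemma dir_neg (f u : EuclideanSpace ℝ (Fin n) → ℝ) (xs : EuclideanSpace ℝ (Fin n))
    (φf φu : EuclideanSpace ℝ (Fin n) → ℝ)
    (hxs : u xs = 0)
    (hf : ∀ g : EuclideanSpace ℝ (Fin n),
      Filter.Tendsto
        (fun p : ℝ × EuclideanSpace ℝ (Fin n) => (f (xs + p.1 • p.2) - f xs) / p.1)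
        (nhdsWithin (0, g) ((Set.Ioi (0:ℝ)) ×ˢ (Set.univ : Set (EuclideanSpace ℝ (Fin n)))))
        (nhds (φf g)))
    (hu : ∀ g : EuclideanSpace ℝ (Fin n),
      Filter.Tendsto
        (fun p : ℝ × EuclideanSpace ℝ (Fin n) => (u (xs + p.1 • p.2) - u xs) / p.1)
        (nhdsWithin (0, g) ((Set.Ioi (0:ℝ)) ×ˢ (Set.univ : Set (EuclideanSpace ℝ (Fin n)))))
        (nhds (φu g)))
    (hmax : IsLocalMaxOn f {x | u x ≤ 0} xs)
    (g : EuclideanSpace ℝ (Fin n)) (hneg : φu g < 0) : φf g ≤ 0 := by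
  have ht : Tendsto (fun t : ℝ => ((t, g) : ℝ × EuclideanSpace ℝ (Fin n))) (𝓝[>] (0:ℝ))
      (nhdsWithin (0, g) ((Set.Ioi (0:ℝ)) ×ˢ (Set.univ : Set (EuclideanSpace ℝ (Fin n))))) := by
    rw [nhdsWithin_prod_eq, nhdsWithin_univ]
    exact Tendsto.prodMk tendsto_id tendsto_const_nhds
  have hfg : Tendsto (fun t : ℝ => (f (xs + t • g) - f xs) / t) (𝓝[>] (0:ℝ)) (𝓝 (φf g)) := by
    simpa [Function.comp_def] using (hf g).comp ht
  have hug : Tendsto (fun t : ℝ => (u (xs + t • g) - u xs) / t) (𝓝[>] (0:ℝ)) (𝓝 (φu g)) := by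
    simpa [Function.comp_def] using (hu g).comp ht
  have hev1 : ∀ᶠ t in 𝓝[>] (0:ℝ), (u (xs + t • g) - u xs) / t < 0 :=
    hug.eventually (eventually_lt_nhds hneg)
  have hpos : ∀ᶠ t in 𝓝[>] (0:ℝ), t ∈ Set.Ioi (0:ℝ) := eventually_mem_nhdsWithin
  have hmem : ∀ᶠ t in 𝓝[>] (0:ℝ), xs + t • g ∈ {x | u x ≤ 0} := by
    filter_upwards [hev1, hpos] with t h1 h2
    have htne : t ≠ 0 := ne_of_gt h2
    have : u (xs + t • g) - u xs = ((u (xs + t • g) - u xs) / t) * t :=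
      (div_mul_cancel₀ _ htne).symm
    have hlt : u (xs + t • g) - u xs < 0 := by
      rw [this]; exact mul_neg_of_neg_of_pos h1 h2
    show u (xs + t • g) ≤ 0
    linarith
  have hbase : Tendsto (fun t : ℝ => xs + t • g) (𝓝 (0:ℝ)) (𝓝 xs) := by
    have hc : Continuous fun t : ℝ => xs + t • g :=
      continuous_const.add (continuous_id.smul continuous_const)
    simpa using hc.tendsto 0
  have htend : Tendsto (fun t : ℝ => xs + t • g) (𝓝[>] (0:ℝ)) (𝓝[{x | u x ≤ 0}] xs) :=
    tendsto_nhdsWithin_iff.mpr ⟨hbase.mono_left nhdsWithin_le_nhds, hmem⟩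
  have hevf : ∀ᶠ t in 𝓝[>] (0:ℝ), f (xs + t • g) ≤ f xs := htend.eventually hmax
  refine le_of_tendsto hfg ?_
  filter_upwards [hevf, hpos] with t h1 h2
  exact div_nonpos_of_nonpos_of_nonneg (sub_nonpos.2 h1) (le_of_lt h2)

end AuxLemmas

/-- necessary condition for a constrained local maximum in terms of upper
exhausters of both `f` and `u`. -/

theorem max_cond_upper_upper {n : ℕ}
(f u : EuclideanSpace ℝ (Fin n) → ℝ) (xs : EuclideanSpace ℝ (Fin n))
    (φf φu : EuclideanSpace ℝ (Fin n) → ℝ)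
    (hxs : u xs = 0)
    (hf : ∀ g : EuclideanSpace ℝ (Fin n),
      Filter.Tendsto
        (fun p : ℝ × EuclideanSpace ℝ (Fin n) => (f (xs + p.1 • p.2) - f xs) / p.1)
        (nhdsWithin (0, g) ((Set.Ioi (0:ℝ)) ×ˢ (Set.univ : Set (EuclideanSpace ℝ (Fin n)))))
        (nhds (φf g)))
    (hu : ∀ g : EuclideanSpace ℝ (Fin n),
      Filter.Tendsto
        (fun p : ℝ × EuclideanSpace ℝ (Fin n) => (u (xs + p.1 • p.2) - u xs) / p.1)
        (nhdsWithin (0, g) ((Set.Ioi (0:ℝ)) ×ˢ (Set.univ : Set (EuclideanSpace ℝ (Fin n)))))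
        (nhds (φu g)))
    (hreg : closure {g | φu g < 0} = {g | φu g ≤ 0})
    (Ef Eu : Set (Set (EuclideanSpace ℝ (Fin n))))
    (hEfne : Ef.Nonempty) (hEune : Eu.Nonempty)
    (hEfsets : ∀ C ∈ Ef, C.Nonempty ∧ Convex ℝ C ∧ IsCompact C)
    (hEusets : ∀ C ∈ Eu, C.Nonempty ∧ Convex ℝ C ∧ IsCompact C)
    (hEfbd : ∃ R : ℝ, ∀ C ∈ Ef, C ⊆ Metric.closedBall 0 R)
    (hEubd : ∃ R : ℝ, ∀ C ∈ Eu, C ⊆ Metric.closedBall 0 R)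
    (hmax : IsLocalMaxOn f {x | u x ≤ 0} xs)
    (hEf : ∀ g : EuclideanSpace ℝ (Fin n),
      IsLeast ((fun C => sSup ((fun v => (inner ℝ v g : ℝ)) '' C)) '' Ef) (φf g))
    (hEu : ∀ g : EuclideanSpace ℝ (Fin n),
      IsLeast ((fun C => sSup ((fun v => (inner ℝ v g : ℝ)) '' C)) '' Eu) (φu g)) :
    (⋃ C ∈ Eu, -(Kplus C)) ⊆ ⋃ C ∈ Ef, -(Kplus C) := by
  obtain ⟨Rf, hRf⟩ := hEfbd
  intro y hy
  rw [mem_union_neg_Kplus] at hy ⊢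
  have h1 : φu y ≤ 0 := (phi_nonpos_iff Eu φu hEusets hEu y).2 hy
  rw [← phi_nonpos_iff Ef φf hEfsets hEf y]
  have hcont : Continuous φf := phi_cont Ef φf Rf hEfsets hRf hEf
  have hsub : {g | φu g < 0} ⊆ {g | φf g ≤ 0} := fun g hg =>
    dir_neg f u xs φf φu hxs hf hu hmax g hg
  have hclosed : IsClosed {g | φf g ≤ 0} := isClosed_le hcont continuous_const
  have hycl : y ∈ closure {g | φu g < 0} := by rw [hreg]; exact h1
  exact closure_minimal hsub hclosed hycl
end
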